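/- Let d ≥ 2 and k ≥ 1 be integers, set ρ_k := C(k+d−2, k), and define the d-variate polynomial F_{k,d}(x) := R_{k,d}(x_1+⋯+x_d) − (1/d)·N_{k,d}(x), which represents the non-conforming Crouzeix–Raviart facet function B_k^{CR,F} on the reference simplex for the facet F opposite the origin. Then F_{k,d}(e_j) = (1+(−1)^{k+1} ρ_k)/d for every standard basis vector e_j of ℝ^d (the vertices lying on F), and F_{k,d}(0,…,0) = (1−d)·(1+(−1)^{k+1} ρ_k)/d (the vertex opposite F). -/

import Mathlib

/-!
At a vertex every argument of `Q_{k,d}` and `R_{k,d}` is `0` or `1`. At `0` only the constant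
terms survive. At `1` both are alternating convolutions `∑ (-1)^ℓ C(n+ℓ, ℓ) C(a, k-ℓ)`, i.e.
coefficients of `X^k` in `(1+X)^{-(n+1)} (1+X)^a = (1+X)^{-(n+1-a)}`, which gives
`Q_{k,d}(1) = (-1)^k ρ_k` and `R_{k,d}(1) = 1`. Hence `N_{k,d}` takes the same value
`d - 1 + (-1)^k ρ_k` at every vertex of the reference simplex, so the vertex values of the facet
function come from `R_{k,d}(1) = 1` and `R_{k,d}(0) = (-1)^k ρ_k`.
-/

/-- `Q_{k,d}(x)`: the explicit representation of the Jacobi polynomial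
`P_k^{(0,d-2)}(1-2x)`. -/
noncomputable def Qpoly (d k : ℕ) (x : ℝ) : ℝ :=
  ∑ ℓ ∈ Finset.range (k + 1),
    (-1 : ℝ) ^ ℓ * ((k + ℓ + d - 2).choose ℓ) * (k.choose ℓ) * x ^ ℓ

/-- `R_{k,d}(x)`: the explicit representation of `P_k^{(0,d-2)}(2x-1)`. -/
noncomputable def Rpoly (d k : ℕ) (x : ℝ) : ℝ :=
  (-1 : ℝ) ^ k * ∑ ℓ ∈ Finset.range (k + 1),
    (-1 : ℝ) ^ ℓ * ((k + ℓ + d - 2).choose ℓ) * ((k + d - 2).choose (ℓ + d - 2))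
      * x ^ ℓ

/-- The `d`-variate polynomial `N_{k,d}`; on the reference simplex it equals
`d` times the non-conforming Crouzeix–Raviart simplex function `B_k^{CR,K̂}`. -/
noncomputable def Npoly (d k : ℕ) (x : Fin d → ℝ) : ℝ :=
  -1 + ∑ j, Qpoly d k (x j) + Rpoly d k (∑ j, x j)

open PowerSeries Finset

section BinomialConvolution

variable {R : Type*} [CommRing R]

lemma PowerSeries.coeff_one_add_X_pow (a j : ℕ) :
    coeff j ((1 + X : R⟦X⟧) ^ a) = a.choose j := by
  rw [← binomialSeries_nat (R := ℤ), binomialSeries_coeff, Ring.choose_natCast, natCast_zsmul,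
    nsmul_one]

/-- `rescale (-1) (invOneSubPow R n)` is `(1 + X)^(-n)`. -/
lemma PowerSeries.rescale_neg_one_invOneSubPow_mul_one_add_X_pow (a b : ℕ) :
    rescale (-1 : R) (invOneSubPow R (b + 1 + a)).val * (1 + X) ^ a
      = rescale (-1 : R) (invOneSubPow R (b + 1)).val := by
  have h := congrArg (rescale (-1 : R))
    (one_sub_pow_mul_invOneSubPow_val_add_eq_invOneSubPow_val R (b + 1) a)
  rwa [map_mul, map_pow, map_sub, map_one, rescale_X, map_neg, map_one, neg_one_mul,
    sub_neg_eq_add, mul_comm] at h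

theorem sum_range_neg_one_pow_mul_choose_mul_choose (a b k : ℕ) :
    ∑ ℓ ∈ range (k + 1), (-1 : R) ^ ℓ * (b + a + ℓ).choose ℓ * a.choose (k - ℓ)
      = (-1) ^ k * (b + k).choose k := by
  have h := congrArg (coeff k) (rescale_neg_one_invOneSubPow_mul_one_add_X_pow (R := R) a b)
  rw [show b + 1 + a = b + a + 1 by ring, coeff_mul,
    Nat.sum_antidiagonal_eq_sum_range_succ_mk] at h
  simp only [coeff_rescale, invOneSubPow_val_succ_eq_mk_add_choose, coeff_mk,
    coeff_one_add_X_pow] at h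
  rw [← Nat.choose_symm_add, ← h]
  simp [Nat.choose_symm_add, mul_assoc]

end BinomialConvolution

lemma Fintype.sum_apply_single {ι α M : Type*} [Fintype ι] [DecidableEq ι] [Zero α]
    [AddCommMonoid M] (f : α → M) (j : ι) (a : α) :
    ∑ i, f ((Pi.single j a : ι → α) i) = f a + (Fintype.card ι - 1) • f 0 := by
  have off_j : ∀ i ∈ ({j}ᶜ : Finset ι), f ((Pi.single j a : ι → α) i) = f 0 := fun i hi => by
    rw [Pi.single_eq_of_ne (mem_compl.1 hi ∘ mem_singleton.2)]
  rw [Fintype.sum_eq_add_sum_compl j, Pi.single_eq_same, Finset.sum_congr rfl off_j, sum_const,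
    card_compl, card_singleton]

section VertexValues

variable {d : ℕ} (k : ℕ)

lemma Qpoly_zero : Qpoly d k 0 = 1 := by
  simp [Qpoly, sum_range_succ']

lemma Rpoly_zero (hd : 2 ≤ d) : Rpoly d k 0 = (-1) ^ k * (k + d - 2).choose k := by
  obtain ⟨m, rfl⟩ : ∃ m, d = m + 2 := ⟨d - 2, by omega⟩
  rw [Rpoly, show k + (m + 2) - 2 = m + k by omega]
  simp [sum_range_succ', Nat.choose_symm_add]

lemma Qpoly_one (hd : 2 ≤ d) : Qpoly d k 1 = (-1) ^ k * (k + d - 2).choose k := by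
  obtain ⟨m, rfl⟩ : ∃ m, d = m + 2 := ⟨d - 2, by omega⟩
  rw [Qpoly, show k + (m + 2) - 2 = m + k by omega,
    ← sum_range_neg_one_pow_mul_choose_mul_choose k m k]
  refine Finset.sum_congr rfl fun ℓ hℓ => ?_
  rw [show k + ℓ + (m + 2) - 2 = m + k + ℓ by omega,
    Nat.choose_symm (Nat.le_of_lt_succ (mem_range.1 hℓ)), one_pow, mul_one]

lemma Rpoly_one (hd : 2 ≤ d) : Rpoly d k 1 = 1 := by
  obtain ⟨m, rfl⟩ : ∃ m, d = m + 2 := ⟨d - 2, by omega⟩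
  have h := sum_range_neg_one_pow_mul_choose_mul_choose (R := ℝ) (k + m) 0 k
  rw [Nat.zero_add, Nat.zero_add, Nat.choose_self, Nat.cast_one, mul_one] at h
  calc Rpoly (m + 2) k 1
      = (-1) ^ k * ∑ ℓ ∈ range (k + 1),
          (-1 : ℝ) ^ ℓ * (k + m + ℓ).choose ℓ * (k + m).choose (k - ℓ) := by
        rw [Rpoly]
        refine congrArg _ (Finset.sum_congr rfl fun ℓ hℓ => ?_)
        have hℓk := Nat.le_of_lt_succ (mem_range.1 hℓ)
        rw [show k + ℓ + (m + 2) - 2 = k + m + ℓ by omega, show k + (m + 2) - 2 = k + m by omega,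
          show ℓ + (m + 2) - 2 = ℓ + m by omega,
          Nat.choose_symm_of_eq_add (show k + m = ℓ + m + (k - ℓ) by omega), one_pow, mul_one]
    _ = 1 := by rw [h, ← mul_pow, neg_one_mul, neg_neg, one_pow]

lemma Npoly_zero (hd : 2 ≤ d) :
    Npoly d k (fun _ => 0) = d - 1 + (-1) ^ k * (k + d - 2).choose k := by
  rw [Npoly, sum_const_zero, Rpoly_zero k hd, Qpoly_zero, sum_const, card_univ, Fintype.card_fin,
    nsmul_one]
  ring

lemma Npoly_single (hd : 2 ≤ d) (j : Fin d) :
    Npoly d k (Pi.single j 1) = d - 1 + (-1) ^ k * (k + d - 2).choose k := by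
  rw [Npoly, Fintype.sum_apply_single, Finset.sum_pi_single', if_pos (mem_univ j),
    Rpoly_one k hd, Qpoly_one k hd, Qpoly_zero, Fintype.card_fin, nsmul_one,
    Nat.cast_sub (by omega), Nat.cast_one]
  ring

end VertexValues

theorem facet_function_vertex_values_general (d k : ℕ) (hd : 2 ≤ d) :
    (∀ j : Fin d,
        Rpoly d k (∑ i, (if i = j then (1 : ℝ) else 0))
            - (1 / d) * Npoly d k (fun i => if i = j then 1 else 0)
          = (1 + (-1) ^ (k + 1) * ((k + d - 2).choose k)) / d) ∧
      Rpoly d k (∑ _i : Fin d, (0 : ℝ)) - (1 / d) * Npoly d k (fun _ => 0)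
        = ((1 : ℝ) - d) * (1 + (-1) ^ (k + 1) * ((k + d - 2).choose k)) / d := by
  have hd0 : (d : ℝ) ≠ 0 := Nat.cast_ne_zero.2 (by omega)
  refine ⟨fun j => ?_, ?_⟩
  · simp only [← Pi.single_apply]
    rw [Finset.sum_pi_single', if_pos (mem_univ j), Npoly_single k hd j, Rpoly_one k hd]
    field_simp
    ring
  · rw [sum_const_zero, Npoly_zero k hd, Rpoly_zero k hd]
    field_simp
    ring

/-- For `d ≥ 2`, `k ≥ 1` and `ρ_k := C(k+d-2, k)`, the facet function
`F_{k,d}(x) := R_{k,d}(∑ x_j) - (1/d) N_{k,d}(x)` (the Crouzeix–Raviart facet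
function `B_k^{CR,F}` for the facet `F` opposite the origin) satisfies
`F_{k,d}(e_j) = (1 + (-1)^{k+1} ρ_k)/d` for each standard basis vector `e_j`,
and `F_{k,d}(0) = (1-d)(1 + (-1)^{k+1} ρ_k)/d`. -/
theorem facet_function_vertex_values (d k : ℕ) (hd : 2 ≤ d) (hk : 1 ≤ k) :
    (∀ j : Fin d,
        Rpoly d k (∑ i, (if i = j then (1 : ℝ) else 0))
            - (1 / d) * Npoly d k (fun i => if i = j then 1 else 0)
          = (1 + (-1) ^ (k + 1) * ((k + d - 2).choose k)) / d) ∧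
      Rpoly d k (∑ _i : Fin d, (0 : ℝ)) - (1 / d) * Npoly d k (fun _ => 0)
        = ((1 : ℝ) - d) * (1 + (-1) ^ (k + 1) * ((k + d - 2).choose k)) / d :=
  facet_function_vertex_values_general d k hd
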